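/- Let v ∈ [-1,1] with D(v) > 0, let λ ∈ (0,1), G ∈ [-1,1], and suppose the noise ξ satisfies |ξ| ≤ (1-λ)(1-|v|)/D(v). Then v'' = v + λ(G - v) + ξ D(v) satisfies |v''| ≤ 1. -/

import Mathlib

/-! The pre-noise value `v + λ (G - v) = (1 - λ) v + λ G` is a convex combination, so its distance
to the boundary of `[-1, 1]` is at least `(1 - λ)(1 - |v|)`; the hypothesis on `ξ` says exactly that
the noise term `ξ D(v)` is no larger than this margin. -/

section NormedSpace

variable {E : Type*} [SeminormedAddCommGroup E] [NormedSpace ℝ E]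

theorem norm_add_smul_sub_le {t : ℝ} (ht₀ : 0 ≤ t) (ht₁ : t ≤ 1) (v w : E) :
    ‖v + t • (w - v)‖ ≤ (1 - t) * ‖v‖ + t * ‖w‖ := by
  have hconv : v + t • (w - v) = (1 - t) • v + t • w := by
    rw [smul_sub, sub_smul, one_smul]; abel
  calc ‖v + t • (w - v)‖ ≤ ‖(1 - t) • v‖ + ‖t • w‖ := hconv ▸ norm_add_le _ _
    _ = (1 - t) * ‖v‖ + t * ‖w‖ := by
      rw [norm_smul, norm_smul, Real.norm_of_nonneg (sub_nonneg.mpr ht₁),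
        Real.norm_of_nonneg ht₀]

theorem norm_add_smul_sub_add_le_one {t : ℝ} (ht₀ : 0 ≤ t) (ht₁ : t ≤ 1) {v w η : E}
    (hw : ‖w‖ ≤ 1) (hη : ‖η‖ ≤ (1 - t) * (1 - ‖v‖)) :
    ‖v + t • (w - v) + η‖ ≤ 1 :=
  calc ‖v + t • (w - v) + η‖ ≤ ‖v + t • (w - v)‖ + ‖η‖ := norm_add_le _ _
    _ ≤ (1 - t) * ‖v‖ + t * ‖w‖ + (1 - t) * (1 - ‖v‖) :=
      add_le_add (norm_add_smul_sub_le ht₀ ht₁ v w) hη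
    _ = 1 - t * (1 - ‖w‖) := by ring
    _ ≤ 1 := sub_le_self _ (mul_nonneg ht₀ (sub_nonneg.mpr hw))

end NormedSpace

theorem stmt_2_general (v G lam ξ : ℝ) (D : ℝ → ℝ)
    (hG : G ∈ Set.Icc (-1:ℝ) 1)
    (hD : 0 < D v) (hlam : lam ∈ Set.Ioo (0:ℝ) 1)
    (hξ : |ξ| ≤ (1 - lam) * (1 - |v|) / D v) :
    |v + lam * (G - v) + ξ * D v| ≤ 1 := by
  have hnoise : |ξ * D v| ≤ (1 - lam) * (1 - |v|) := by
    rw [abs_mul, abs_of_pos hD]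
    exact (le_div_iff₀ hD).mp hξ
  simpa only [Real.norm_eq_abs, smul_eq_mul] using
    norm_add_smul_sub_add_le_one (v := v) hlam.1.le hlam.2.le (abs_le.mpr hG) hnoise

theorem stmt_2 (v G lam ξ : ℝ) (D : ℝ → ℝ)
    (hv : v ∈ Set.Icc (-1:ℝ) 1) (hG : G ∈ Set.Icc (-1:ℝ) 1)
    (hD : 0 < D v) (hlam : lam ∈ Set.Ioo (0:ℝ) 1)
    (hξ : |ξ| ≤ (1 - lam) * (1 - |v|) / D v) :
    |v + lam * (G - v) + ξ * D v| ≤ 1 :=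
  stmt_2_general v G lam ξ D hG hD hlam hξ
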